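/- Let λ > 0 and define f_λ : (−π/2, π/2) → ℝ by f_λ(ψ) = sin ψ · ∫₀^{ψ} (cos t)^{1/λ} dt + λ (cos ψ)^{1+1/λ}. Then for all ψ ∈ (−π/2, π/2): f_λ(ψ) − f_λ'(ψ) tan ψ = λ (cos ψ)^{(1−λ)/λ}; that is, m_λ(ψ) := f_λ(ψ) − f_λ'(ψ) tan ψ equals λ g_λ(ψ) with g_λ(ψ) = (cos ψ)^{−(λ−1)/λ}. -/

import Mathlib

/-! Differentiating `f_λ`, the two terms carrying `sin² ψ (cos ψ)^{1/λ}` combine to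
`f_λ'(ψ) = cos ψ ∫₀^ψ (cos t)^{1/λ} dt - λ sin ψ (cos ψ)^{1/λ}`. In `f_λ - f_λ' tan ψ` the
integral then cancels, leaving `λ (cos ψ)^{1/λ - 1} (cos² ψ + sin² ψ)`. -/

open Real intervalIntegral

noncomputable section

/-- `f_λ(ψ) = sin ψ ∫₀^ψ (cos t)^{1/λ} dt + λ (cos ψ)^{1+1/λ}` -/
def fL (lam p : ℝ) : ℝ :=
  Real.sin p * (∫ t in (0:ℝ)..p, Real.cos t ^ (1 / lam)) + lam * Real.cos p ^ (1 + 1 / lam)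

lemma continuousOn_cos_rpow (a : ℝ) :
    ContinuousOn (fun t => cos t ^ a) (Set.Ioo (-(π / 2)) (π / 2)) := fun _ ht =>
  (continuous_cos.continuousAt.rpow_const (Or.inl (cos_pos_of_mem_Ioo ht).ne')).continuousWithinAt

lemma hasDerivAt_integral_cos_rpow (a : ℝ) {p : ℝ} (hp : p ∈ Set.Ioo (-(π / 2)) (π / 2)) :
    HasDerivAt (fun u => ∫ t in (0:ℝ)..u, cos t ^ a) (cos p ^ a) p := by
  have hsub : Set.uIcc 0 p ⊆ Set.Ioo (-(π / 2)) (π / 2) :=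
    Set.OrdConnected.uIcc_subset inferInstance (by constructor <;> linarith [pi_pos]) hp
  refine integral_hasDerivAt_right ((continuousOn_cos_rpow a).mono hsub).intervalIntegrable
    (continuous_cos.measurable.pow_const a).stronglyMeasurable.stronglyMeasurableAtFilter ?_
  exact (continuousOn_cos_rpow a).continuousAt (isOpen_Ioo.mem_nhds hp)

lemma hasDerivAt_fL {lam p : ℝ} (hlam : lam ≠ 0) (hp : p ∈ Set.Ioo (-(π / 2)) (π / 2)) :
    HasDerivAt (fL lam)
      (cos p * (∫ t in (0:ℝ)..p, cos t ^ (1 / lam)) - lam * sin p * cos p ^ (1 / lam)) p := by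
  have hpow : HasDerivAt (fun u => cos u ^ (1 + 1 / lam))
      (-sin p * (1 + 1 / lam) * cos p ^ (1 + 1 / lam - 1)) p :=
    (hasDerivAt_cos p).rpow_const (Or.inl (cos_pos_of_mem_Ioo hp).ne')
  refine (((hasDerivAt_sin p).mul (hasDerivAt_integral_cos_rpow (1 / lam) hp)).add
    (hpow.const_mul lam)).congr_deriv ?_
  rw [add_sub_cancel_left]
  field_simp
  ring

theorem stmt16 (lam : ℝ) (hlam : 0 < lam) :
    ∀ p ∈ Set.Ioo (-(π / 2)) (π / 2),
      fL lam p - deriv (fL lam) p * Real.tan p = lam * Real.cos p ^ (-((lam - 1) / lam)) := by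
  intro p hp
  have hcos : 0 < cos p := cos_pos_of_mem_Ioo hp
  have hexp : -((lam - 1) / lam) = 1 / lam - 1 := by field_simp; ring
  have hpow : cos p ^ (1 + 1 / lam) = cos p * cos p ^ (1 / lam) := by
    rw [rpow_add hcos, rpow_one]
  rw [(hasDerivAt_fL hlam.ne' hp).deriv, fL, hexp, rpow_sub hcos, rpow_one, hpow, tan_eq_sin_div_cos]
  field_simp
  linear_combination lam * cos p ^ (1 / lam) * sin_sq_add_cos_sq p
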